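/- arXiv:2212.13978 — 4 statements merged into one kernel-verified Lean document; each statement's English description precedes it below -/
import Mathlib

section
/- Let c > 0 and d > 0 be real numbers. There exists a constant M ≥ 1, depending only on c and d, such that for every real λ with dλ ≥ c² and every t ∈ ℝ, the operator norm of the matrix exponential exp(t·M_λ) of the 2×2 real matrix M_λ = [[0, √λ], [−d√λ, −c]] satisfies ‖exp(t·M_λ)‖ ≤ M·e^{(c/2)|t|}. -/
/-!
Write the matrix as `-(c/2) + N` with `N² = -ω²`, where `ω² = dλ - c²/4 > 0`. Then `J = N/ω`
satisfies `J² = -1`, so `i ↦ J` extends to a continuous algebra map `ℂ → End(ℝ²)` which carries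
`exp(-(c/2)t + iωt)` to `exp(t M_λ)`; this gives `‖exp(t M_λ)‖ ≤ e^{-ct/2} (1 + ‖J‖)`. The
Frobenius norm of `J` stays bounded in `λ`, because `dλ ≥ c²` makes `ω²` comparable to `dλ`.
-/

open NormedSpace

theorem norm_exp_algebraMap_add_smul_le {A : Type*} [NormedRing A] [NormedAlgebra ℝ A]
    [Algebra ℚ A] {J : A} (hJ : J * J = -1) (a b : ℝ) :
    ‖exp (algebraMap ℝ A a + b • J)‖ ≤ Real.exp a * (‖(1 : A)‖ + ‖J‖) := by
  set φ := Complex.liftAux J hJ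
  have hφ : Continuous φ := φ.toLinearMap.continuous_of_finiteDimensional
  have hz : algebraMap ℝ A a + b • J = φ (a + b * Complex.I) := by
    simp [φ, Complex.liftAux_apply]
  rw [hz, ← map_exp φ hφ, ← Complex.exp_eq_exp_ℂ, Complex.liftAux_apply]
  set w := Complex.exp (a + b * Complex.I)
  have hw : ‖w‖ = Real.exp a := by simp [w, Complex.norm_exp]
  calc ‖algebraMap ℝ A w.re + w.im • J‖ ≤ ‖w.re‖ * ‖(1 : A)‖ + ‖w.im‖ * ‖J‖ := by
        grw [norm_add_le, norm_algebraMap, norm_smul_le]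
    _ ≤ ‖w‖ * ‖(1 : A)‖ + ‖w‖ * ‖J‖ := by
        gcongr
        · exact Complex.abs_re_le_norm w
        · exact Complex.abs_im_le_norm w
    _ = Real.exp a * (‖(1 : A)‖ + ‖J‖) := by rw [hw, mul_add]

theorem Matrix.norm_toEuclideanCLM_le_sqrt_sum_sq {𝕜 n : Type*} [RCLike 𝕜] [Fintype n]
    [DecidableEq n] (A : Matrix n n 𝕜) :
    ‖toEuclideanCLM (𝕜 := 𝕜) A‖ ≤ √(∑ i, ∑ j, ‖A i j‖ ^ 2) := by
  refine ContinuousLinearMap.opNorm_le_bound _ (by positivity) fun x => ?_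
  rw [← Real.sqrt_sq (norm_nonneg (toEuclideanCLM (𝕜 := 𝕜) A x)),
    ← Real.sqrt_sq (norm_nonneg x), ← Real.sqrt_mul (by positivity)]
  refine Real.sqrt_le_sqrt ?_
  rw [EuclideanSpace.norm_sq_eq, EuclideanSpace.norm_sq_eq, Finset.sum_mul]
  refine Finset.sum_le_sum fun i _ => ?_
  calc ‖(toEuclideanCLM (𝕜 := 𝕜) A x) i‖ ^ 2 ≤ (∑ j, ‖A i j‖ * ‖x j‖) ^ 2 := by
        rw [ofLp_toEuclideanCLM, mulVec, dotProduct]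
        gcongr
        exact (norm_sum_le _ _).trans_eq (by simp only [norm_mul])
    _ ≤ (∑ j, ‖A i j‖ ^ 2) * ∑ j, ‖x j‖ ^ 2 := Finset.sum_mul_sq_le_sq_mul_sq _ _ _

section Block

variable (c d r : ℝ)

theorem block_eq_smul_one_add :
    !![0, r; -d * r, -c] =
      (-(c / 2)) • (1 : Matrix (Fin 2) (Fin 2) ℝ) + !![c / 2, r; -d * r, -c / 2] := by
  ext i j
  fin_cases i <;> fin_cases j <;> simp [neg_div, ← neg_add]

theorem traceless_block_mul_self :
    !![c / 2, r; -d * r, -c / 2] * !![c / 2, r; -d * r, -c / 2] =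
      (c ^ 2 / 4 - d * r ^ 2) • (1 : Matrix (Fin 2) (Fin 2) ℝ) := by
  ext i j
  fin_cases i <;> fin_cases j <;> simp [Matrix.mul_apply] <;> ring

theorem norm_toEuclideanCLM_traceless_block_le :
    ‖Matrix.toEuclideanCLM (𝕜 := ℝ) !![c / 2, r; -d * r, -c / 2]‖ ≤
      √(c ^ 2 / 2 + (1 + d ^ 2) * r ^ 2) := by
  refine (Matrix.norm_toEuclideanCLM_le_sqrt_sum_sq _).trans_eq ?_
  congr 1
  simp only [Matrix.of_apply, Matrix.cons_val', Matrix.cons_val_fin_one, Real.norm_eq_abs, sq_abs,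
    Fin.sum_univ_two, Matrix.cons_val_zero, Matrix.cons_val_one]
  ring

variable {c d r}

theorem norm_exp_smul_block_le {ω : ℝ} (hω : 0 < ω) (hω2 : ω ^ 2 = d * r ^ 2 - c ^ 2 / 4)
    (t : ℝ) :
    ‖exp (t • Matrix.toEuclideanCLM (𝕜 := ℝ) !![0, r; -d * r, -c])‖ ≤
      Real.exp (-(c / 2) * t) * (1 + √(c ^ 2 / 2 + (1 + d ^ 2) * r ^ 2) / ω) := by
  set N := Matrix.toEuclideanCLM (𝕜 := ℝ) !![c / 2, r; -d * r, -c / 2] with hN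
  have hJ : (ω⁻¹ • N) * (ω⁻¹ • N) = -1 := by
    rw [hN, ← map_smul, ← map_mul, smul_mul_smul_comm, traceless_block_mul_self, smul_smul,
      show ω⁻¹ * ω⁻¹ * (c ^ 2 / 4 - d * r ^ 2) = -1 by field_simp; linarith, neg_one_smul,
      map_neg, map_one]
  have hdecomp : t • Matrix.toEuclideanCLM (𝕜 := ℝ) !![0, r; -d * r, -c] =
      algebraMap ℝ _ (-(c / 2) * t) + (ω * t) • (ω⁻¹ • N) := by
    rw [block_eq_smul_one_add, map_add, map_smul, map_one, ← hN, smul_add, smul_smul, smul_smul,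
      show ω * t * ω⁻¹ = t by field_simp, Algebra.algebraMap_eq_smul_one, mul_comm]
  have hJnorm : ‖ω⁻¹ • N‖ ≤ √(c ^ 2 / 2 + (1 + d ^ 2) * r ^ 2) / ω := by
    rw [norm_smul, norm_inv, Real.norm_of_nonneg hω.le, inv_mul_eq_div]
    gcongr
    exact norm_toEuclideanCLM_traceless_block_le c d r
  rw [hdecomp]
  grw [norm_exp_algebraMap_add_smul_le hJ, norm_one, hJnorm]

end Block

theorem sqrt_div_sqrt_le_of_sq_le_mul {c d lam : ℝ} (hd : 0 < d) (hlam : c ^ 2 ≤ d * lam) :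
    √(c ^ 2 / 2 + (1 + d ^ 2) * lam) / √(d * lam - c ^ 2 / 4) ≤ √(1 + 2 * (d + d⁻¹)) := by
  rw [← Real.sqrt_div' _ (by nlinarith)]
  refine Real.sqrt_le_sqrt (div_le_of_le_mul₀ (by nlinarith) (by positivity) ?_)
  have hinv : d⁻¹ * d = 1 := inv_mul_cancel₀ hd.ne'
  have hinv_nonneg : 0 ≤ d⁻¹ := by positivity
  nlinarith [mul_le_mul_of_nonneg_left hlam hinv_nonneg, mul_le_mul_of_nonneg_left hlam hd.le]

/-- For `c, d > 0` there is a constant `M ≥ 1`, depending only on `c` and `d`, such that for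
every real `λ` with `dλ ≥ c²` and every `t ∈ ℝ`, the operator norm of the exponential of
`t • [[0, √λ], [-d√λ, -c]]` (viewed as an operator on Euclidean `ℝ²`) is at most
`M e^{(c/2)|t|}`. -/
theorem normalized_block_group_bound (c d : ℝ) (hc : 0 < c) (hd : 0 < d) :
    ∃ M : ℝ, 1 ≤ M ∧ ∀ lam : ℝ, c ^ 2 ≤ d * lam → ∀ t : ℝ,
      ‖exp (t • (Matrix.toEuclideanCLM (𝕜 := ℝ)
          !![0, Real.sqrt lam; -d * Real.sqrt lam, -c]))‖
        ≤ M * Real.exp ((c / 2) * |t|) := by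
  refine ⟨1 + √(1 + 2 * (d + d⁻¹)), le_add_of_nonneg_right (Real.sqrt_nonneg _),
    fun lam hlam t => ?_⟩
  have hlam0 : 0 ≤ lam := nonneg_of_mul_nonneg_right (by nlinarith) hd
  have hgap : 0 < d * lam - c ^ 2 / 4 := by nlinarith
  have hω2 : √(d * lam - c ^ 2 / 4) ^ 2 = d * √lam ^ 2 - c ^ 2 / 4 := by
    rw [Real.sq_sqrt hlam0, Real.sq_sqrt hgap.le]
  have hdecay : -(c / 2) * t ≤ c / 2 * |t| := by nlinarith [neg_abs_le t]
  grw [norm_exp_smul_block_le (Real.sqrt_pos.2 hgap) hω2 t, Real.sq_sqrt hlam0,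
    sqrt_div_sqrt_le_of_sq_le_mul hd hlam, hdecay, mul_comm]
end

section
/- Let Z and U be real Hilbert spaces, B : U →L Z continuous linear, 0 < ς ≤ T, and S : ℝ → (Z →L Z) with s ↦ S(s) continuous in operator norm. Suppose the Gramian W_ς := ∫_{T−ς}^{T} S(T−s) ∘ B ∘ B* ∘ S(T−s)* ds is invertible with continuous inverse. Let w, z* ∈ Z, let f : [T−ς, T] → Z be Bochner integrable with s ↦ S(T−s)f(s) integrable, and set ũ(s) = B* S(T−s)* W_ς⁻¹ (z* − S(ς)w). Then the state z_T := S(ς)w + ∫_{T−ς}^{T} S(T−s)( B ũ(s) + f(s) ) ds satisfies ‖z_T − z*‖ ≤ ∫_{T−ς}^{T} ‖S(T−s)‖·‖f(s)‖ ds. -/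
open MeasureTheory ContinuousLinearMap

/-!
Since `W` has the right inverse `Winv`, the control `ũ` steers the unperturbed system exactly:
`∫ S(T-s) B ũ(s) ds = W (Winv (z* - S(ς)w)) = z* - S(ς)w`. Hence `z_T - z* = ∫ S(T-s) f(s) ds`,
and the bound is the norm estimate `‖S(T-s) f(s)‖ ≤ ‖S(T-s)‖ ‖f(s)‖` under the integral.
-/

section Gramian

variable {Z U : Type*}
  [NormedAddCommGroup Z] [InnerProductSpace ℝ Z] [CompleteSpace Z]
  [NormedAddCommGroup U] [InnerProductSpace ℝ U] [CompleteSpace U]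
  (B : U →L[ℝ] Z) {K : ℝ → Z →L[ℝ] Z}

theorem Continuous.gramian_integrand (hK : Continuous K) :
    Continuous fun s => (K s).comp (B.comp ((adjoint B).comp (adjoint (K s)))) :=
  hK.clm_comp (continuous_const.clm_comp
    (continuous_const.clm_comp ((adjoint : (Z →L[ℝ] Z) ≃ₗᵢ⋆[ℝ] _).continuous.comp hK)))

theorem intervalIntegral_gramian_control_eq (hK : Continuous K) {a b : ℝ} {W Winv : Z →L[ℝ] Z}
    (hW : W = ∫ s in a..b, (K s).comp (B.comp ((adjoint B).comp (adjoint (K s)))))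
    (hWinv : W.comp Winv = ContinuousLinearMap.id ℝ Z) (y : Z) :
    ∫ s in a..b, K s (B (adjoint B (adjoint (K s) (Winv y)))) = y := by
  have hint := (hK.gramian_integrand B).intervalIntegrable (μ := volume) a b
  calc ∫ s in a..b, K s (B (adjoint B (adjoint (K s) (Winv y))))
      = W (Winv y) := by rw [hW, intervalIntegral_apply hint]; rfl
    _ = y := by rw [← comp_apply, hWinv, id_apply]

end Gramian

theorem intervalIntegral.norm_integral_clm_apply_le {E F : Type*} [NormedAddCommGroup E]
    [NormedSpace ℝ E] [NormedAddCommGroup F] [NormedSpace ℝ F] {K : ℝ → E →L[ℝ] F}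
    {f : ℝ → E} {a b : ℝ} (hab : a ≤ b) (hK : Continuous K)
    (hf : IntervalIntegrable f volume a b) :
    ‖∫ s in a..b, K s (f s)‖ ≤ ∫ s in a..b, ‖K s‖ * ‖f s‖ :=
  intervalIntegral.norm_integral_le_of_norm_le hab
    (.of_forall fun s _ => (K s).le_opNorm (f s))
    (hf.norm.continuousOn_mul hK.norm.continuousOn)

theorem approximate_controllability_error_estimate_general {Z U : Type*}
    [NormedAddCommGroup Z] [InnerProductSpace ℝ Z] [CompleteSpace Z]
    [NormedAddCommGroup U] [InnerProductSpace ℝ U] [CompleteSpace U]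
    (B : U →L[ℝ] Z) (ς T : ℝ) (hς : 0 < ς)
    (S : ℝ → Z →L[ℝ] Z) (hS : Continuous S)
    (W Winv : Z →L[ℝ] Z)
    (hW : W = ∫ s in (T - ς)..T,
      (S (T - s)).comp (B.comp ((adjoint B).comp (adjoint (S (T - s))))))
    (hWinv₂ : W.comp Winv = ContinuousLinearMap.id ℝ Z)
    (w zs : Z) (f : ℝ → Z)
    (hf : IntervalIntegrable f volume (T - ς) T)
    (hSf : IntervalIntegrable (fun s => (S (T - s)) (f s)) volume (T - ς) T)
    (u : ℝ → U)
    (hu : ∀ s : ℝ, u s = (adjoint B) ((adjoint (S (T - s))) (Winv (zs - (S ς) w))))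
    (zT : Z)
    (hzT : zT = (S ς) w + ∫ s in (T - ς)..T, (S (T - s)) (B (u s) + f s)) :
    ‖zT - zs‖ ≤ ∫ s in (T - ς)..T, ‖S (T - s)‖ * ‖f s‖ := by
  have hK : Continuous fun s => S (T - s) := hS.comp (continuous_const.sub continuous_id)
  simp only [hu] at hzT
  have hcontrol := intervalIntegral_gramian_control_eq B hK hW hWinv₂ (zs - S ς w)
  have hcontrol_int : IntervalIntegrable
      (fun s => S (T - s) (B (adjoint B (adjoint (S (T - s)) (Winv (zs - S ς w))))))
      volume (T - ς) T :=
    ((hK.gramian_integrand B).clm_apply continuous_const).intervalIntegrable _ _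
  have herror : zT - zs = ∫ s in (T - ς)..T, S (T - s) (f s) := by
    simp only [map_add] at hzT
    rw [hzT, intervalIntegral.integral_add hcontrol_int hSf, hcontrol]
    abel
  rw [herror]
  exact intervalIntegral.norm_integral_clm_apply_le (by linarith) hK hf

/-- Error estimate for approximate controllability: with the Gramian
`W_ς = ∫_{T-ς}^T S(T-s) B B* S(T-s)* ds` invertible, steering control
`ũ(s) = B* S(T-s)* W_ς⁻¹ (z* - S(ς)w)`, and a perturbation `f`, the reached state
`z_T = S(ς)w + ∫_{T-ς}^T S(T-s)(B ũ(s) + f(s)) ds` satisfies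
`‖z_T - z*‖ ≤ ∫_{T-ς}^T ‖S(T-s)‖ ‖f(s)‖ ds`. -/
theorem approximate_controllability_error_estimate {Z U : Type*}
    [NormedAddCommGroup Z] [InnerProductSpace ℝ Z] [CompleteSpace Z]
    [NormedAddCommGroup U] [InnerProductSpace ℝ U] [CompleteSpace U]
    (B : U →L[ℝ] Z) (ς T : ℝ) (hς : 0 < ς) (hςT : ς ≤ T)
    (S : ℝ → Z →L[ℝ] Z) (hS : Continuous S)
    (W Winv : Z →L[ℝ] Z)
    (hW : W = ∫ s in (T - ς)..T,
      (S (T - s)).comp (B.comp ((adjoint B).comp (adjoint (S (T - s))))))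
    (hWinv₁ : Winv.comp W = ContinuousLinearMap.id ℝ Z)
    (hWinv₂ : W.comp Winv = ContinuousLinearMap.id ℝ Z)
    (w zs : Z) (f : ℝ → Z)
    (hf : IntervalIntegrable f volume (T - ς) T)
    (hSf : IntervalIntegrable (fun s => (S (T - s)) (f s)) volume (T - ς) T)
    (u : ℝ → U)
    (hu : ∀ s : ℝ, u s = (adjoint B) ((adjoint (S (T - s))) (Winv (zs - (S ς) w))))
    (zT : Z)
    (hzT : zT = (S ς) w + ∫ s in (T - ς)..T, (S (T - s)) (B (u s) + f s)) :
    ‖zT - zs‖ ≤ ∫ s in (T - ς)..T, ‖S (T - s)‖ * ‖f s‖ :=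
  approximate_controllability_error_estimate_general B ς T hς S hS W Winv hW hWinv₂ w zs f hf hSf u
    hu zT hzT
end

section
/- Let Z be a real Banach space, U a real normed space, T > 0, r > 0, delays 0 < τ₁ < … < τ_q < r < T, and impulse times 0 < t₁ < … < t_m < T. For y : [−r,T] → Z and t ∈ [0,T], the history y_t : [−r,0] → Z is y_t(θ) = y(t+θ). Let S : [0,T] → (Z →L Z) satisfy ‖S(t)‖ ≤ M for all t ∈ [0,T]; let F : [0,T] × ([−r,0] → Z) → Z satisfy ‖F(t,ψ₁) − F(t,ψ₂)‖ ≤ l·sup_{θ∈[−r,0]} ‖ψ₁(θ) − ψ₂(θ)‖; let G map q-tuples of functions [−r,0] → Z to functions [−r,0] → Z with ‖G(φ₁,…,φ_q)(s) − G(ψ₁,…,ψ_q)(s)‖ ≤ L·Σ_{i=1}^{q} ‖φᵢ(s) − ψᵢ(s)‖ for all s ∈ [−r,0]; let J_k : [0,T] × Z → Z satisfy ‖J_k(t,y) − J_k(t,z)‖ ≤ d_k‖y − z‖, and set N = Σ_{k=1}^{m} d_k. Fix ρ : [−r,0] → Z and z* ∈ Z, define L(y) = z* − S(T)(ρ(0)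 − G(y_{τ₁},…,y_{τ_q})(0)) − ∫₀ᵀ S(T−s) F(s, y_s) ds − Σ_{k=1}^{m} S(T−t_k) J_k(t_k, y(t_k)). Let B : U →L Z be continuous linear, and let Γ : Z → ([0,T] → U) be a linear map with sup_{s∈[0,T]} ‖(Γξ)(s)‖ ≤ K‖ξ‖ for all ξ ∈ Z. For bounded y : [−r,T] → Z (for which all Bochner integrals below exist), define (κ y)(t) = S(t)(ρ(0) − G(y_{τ₁},…,y_{τ_q})(0)) + ∫₀ᵗ S(t−s) B (Γ(L(y)))(s) ds + ∫₀ᵗ S(t−s) F(s, y_s) ds + Σ_{t_k < t} S(t−t_k) J_k(t_k, y(t_k)) for t ∈ [0,T]. Then, with 𝒞 = M·L·q + M·T·l + M·N, for all such y, ω and all t ∈ [0,T]: ‖(κ y)(t) − (κ ω)(t)‖ ≤ ( M·L·q + M·T·‖B‖·K·𝒞 + M·T·l + M·N ) · sup_{t∈[−r,T]} ‖y(t) − ω(t)‖. In particular, if M·L·q + M·T·‖B‖·K·𝒞 + M·T·l + M·N < 1, then κ is a contraction in the sup norm. -/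
open MeasureTheory Set

/-!
Every term of `κ y - κ ω` is a Lipschitz image of `y - ω`: the nonlocal term through `S(t)` and
`G` (one copy of the sup distance per delay), the two convolution integrals through `‖S‖ ≤ M` on
an interval of length at most `T`, and the impulses through the `d_k`. The control term is the
only indirect one: it is Lipschitz in `L(y) - L(ω)` with constant `M T ‖B‖ K`, and `L` is made of
the same three kinds of terms evaluated at time `T`, whence the factor `𝒞 = M L q + M T l + M N`.
-/

lemma bddAbove_range_norm_sub {α E : Type*} [SeminormedAddCommGroup E] {s : Set α}
    {y ω : α → E} (hy : ∃ C, ∀ t ∈ s, ‖y t‖ ≤ C) (hω : ∃ C, ∀ t ∈ s, ‖ω t‖ ≤ C) :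
    BddAbove (range fun σ : s => ‖y σ - ω σ‖) := by
  obtain ⟨C₁, hC₁⟩ := hy
  obtain ⟨C₂, hC₂⟩ := hω
  refine ⟨C₁ + C₂, ?_⟩
  rintro _ ⟨σ, rfl⟩
  exact (norm_sub_le _ _).trans (add_le_add (hC₁ σ σ.2) (hC₂ σ σ.2))

lemma iSup_norm_history_sub_le {E : Type*} [SeminormedAddCommGroup E] {r T D s : ℝ}
    (hr : 0 ≤ r) (hs : s ∈ Icc 0 T) {y ω : ℝ → E}
    (hD : ∀ σ ∈ Icc (-r) T, ‖y σ - ω σ‖ ≤ D) :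
    ⨆ θ : Icc (-r) (0 : ℝ), ‖y (s + θ) - ω (s + θ)‖ ≤ D := by
  have : Nonempty (Icc (-r) (0 : ℝ)) := ⟨⟨0, by simpa using hr⟩⟩
  refine ciSup_le fun θ => hD _ ⟨?_, ?_⟩
  · linarith [hs.1, θ.2.1]
  · linarith [hs.2, θ.2.2]

lemma norm_control_sub_le {E U : Type*} [NormedAddCommGroup E] [NormedSpace ℝ E]
    [NormedAddCommGroup U] [NormedSpace ℝ U] (B : U →L[ℝ] E) {Γ : E →ₗ[ℝ] ℝ → U} {K T : ℝ}
    (hΓ : ∀ (ξ : E), ∀ s ∈ Icc (0 : ℝ) T, ‖Γ ξ s‖ ≤ K * ‖ξ‖) {s : ℝ}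
    (hs : s ∈ Icc 0 T) (ξ ξ' : E) :
    ‖B (Γ ξ s) - B (Γ ξ' s)‖ ≤ ‖B‖ * K * ‖ξ - ξ'‖ := by
  rw [← map_sub, ← Pi.sub_apply, ← map_sub, mul_assoc]
  exact B.le_of_opNorm_le le_rfl _ |>.trans <|
    mul_le_mul_of_nonneg_left (hΓ _ s hs) (norm_nonneg B)

lemma norm_sub₃_sub_sub₃_le {E : Type*} [SeminormedAddCommGroup E] (z a b c a' b' c' : E) :
    ‖(z - a - b - c) - (z - a' - b' - c')‖ ≤ ‖a - a'‖ + ‖b - b'‖ + ‖c - c'‖ := by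
  calc ‖(z - a - b - c) - (z - a' - b' - c')‖ = ‖(a' - a) + (b' - b) + (c' - c)‖ := by
        congr 1; abel
    _ ≤ ‖a' - a‖ + ‖b' - b‖ + ‖c' - c‖ := norm_add₃_le
    _ = _ := by simp only [norm_sub_rev]

lemma norm_add₄_sub_add₄_le {E : Type*} [SeminormedAddCommGroup E] (a b c d a' b' c' d' : E) :
    ‖(a + b + c + d) - (a' + b' + c' + d')‖
      ≤ ‖a - a'‖ + ‖b - b'‖ + ‖c - c'‖ + ‖d - d'‖ := by
  calc ‖(a + b + c + d) - (a' + b' + c' + d')‖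
        = ‖(a - a') + (b - b') + (c - c') + (d - d')‖ := by congr 1; abel
    _ ≤ _ := norm_add₄_le

section BoundedFamily

variable {E : Type*} [NormedAddCommGroup E] [NormedSpace ℝ E]
  {S : ℝ → E →L[ℝ] E} {M T : ℝ}

lemma norm_apply_sub_apply_le (hM : ∀ u ∈ Icc 0 T, ‖S u‖ ≤ M) {u : ℝ} (hu : u ∈ Icc 0 T)
    (x x' : E) : ‖S u x - S u x'‖ ≤ M * ‖x - x'‖ := by
  rw [← map_sub]
  exact (S u).le_of_opNorm_le (hM u hu) _

lemma norm_integral_sub_integral_le (hM : ∀ u ∈ Icc 0 T, ‖S u‖ ≤ M) {t : ℝ}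
    (ht : t ∈ Icc 0 T) {f g : ℝ → E}
    (hf : IntervalIntegrable (fun s => S (t - s) (f s)) volume 0 t)
    (hg : IntervalIntegrable (fun s => S (t - s) (g s)) volume 0 t)
    {c : ℝ} (hc : 0 ≤ c) (hfg : ∀ s ∈ Icc 0 t, ‖f s - g s‖ ≤ c) :
    ‖(∫ s in (0 : ℝ)..t, S (t - s) (f s)) - ∫ s in (0 : ℝ)..t, S (t - s) (g s)‖
      ≤ M * T * c := by
  have hM0 : 0 ≤ M := (norm_nonneg _).trans (hM t ht)
  rw [← intervalIntegral.integral_sub hf hg]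
  have hbound : ∀ s ∈ uIoc 0 t, ‖S (t - s) (f s) - S (t - s) (g s)‖ ≤ M * c := by
    intro s hs
    rw [uIoc_of_le ht.1] at hs
    refine (norm_apply_sub_apply_le hM ⟨?_, ?_⟩ _ _).trans
      (mul_le_mul_of_nonneg_left (hfg s ⟨hs.1.le, hs.2⟩) hM0)
    · linarith [hs.2]
    · linarith [hs.1, ht.2]
  calc _ ≤ M * c * |t - 0| := intervalIntegral.norm_integral_le_of_norm_le_const hbound
    _ ≤ M * c * T := by
        rw [sub_zero, abs_of_nonneg ht.1]
        exact mul_le_mul_of_nonneg_left ht.2 (mul_nonneg hM0 hc)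
    _ = M * T * c := by ring

lemma norm_nonlocal_sub_le (hM : ∀ u ∈ Icc 0 T, ‖S u‖ ≤ M) {ι : Type*} [Fintype ι]
    {G : (ι → ℝ → E) → ℝ → E} {L r D : ℝ} (hr : 0 ≤ r) (hL : 0 ≤ L)
    (hG : ∀ (φ ψ : ι → ℝ → E) (s : ℝ), s ∈ Icc (-r) (0 : ℝ) →
      ‖G φ s - G ψ s‖ ≤ L * ∑ i, ‖φ i s - ψ i s‖)
    {τ : ι → ℝ} {y ω : ℝ → E} (hD : ∀ i, ‖y (τ i) - ω (τ i)‖ ≤ D) {u : ℝ} (hu : u ∈ Icc 0 T)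
    (z : E) :
    ‖S u (z - G (fun i θ => y (τ i + θ)) 0) - S u (z - G (fun i θ => ω (τ i + θ)) 0)‖
      ≤ M * (L * (Fintype.card ι * D)) := by
  have hM0 : 0 ≤ M := (norm_nonneg _).trans (hM u hu)
  refine (norm_apply_sub_apply_le hM hu _ _).trans (mul_le_mul_of_nonneg_left ?_ hM0)
  rw [sub_sub_sub_cancel_left, norm_sub_rev]
  refine (hG _ _ 0 ⟨by linarith, le_rfl⟩).trans (mul_le_mul_of_nonneg_left ?_ hL)
  calc ∑ i, ‖y (τ i + 0) - ω (τ i + 0)‖ ≤ ∑ _i : ι, D :=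
        Finset.sum_le_sum fun i _ => by simpa using hD i
    _ = Fintype.card ι * D := by simp

lemma norm_integral_history_sub_le (hM : ∀ u ∈ Icc 0 T, ‖S u‖ ≤ M)
    {F : ℝ → (ℝ → E) → E} {l r D : ℝ} (hr : 0 ≤ r) (hl : 0 ≤ l)
    (hF : ∀ (t : ℝ) (ψ₁ ψ₂ : ℝ → E),
      ‖F t ψ₁ - F t ψ₂‖ ≤ l * ⨆ θ : Icc (-r) (0 : ℝ), ‖ψ₁ θ - ψ₂ θ‖)
    {y ω : ℝ → E} (hD : ∀ σ ∈ Icc (-r) T, ‖y σ - ω σ‖ ≤ D) {t : ℝ} (ht : t ∈ Icc 0 T)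
    (hy : IntervalIntegrable (fun s => S (t - s) (F s (fun θ => y (s + θ)))) volume 0 t)
    (hω : IntervalIntegrable (fun s => S (t - s) (F s (fun θ => ω (s + θ)))) volume 0 t) :
    ‖(∫ s in (0 : ℝ)..t, S (t - s) (F s (fun θ => y (s + θ))))
      - ∫ s in (0 : ℝ)..t, S (t - s) (F s (fun θ => ω (s + θ)))‖ ≤ M * T * (l * D) := by
  have hD0 : 0 ≤ D := (norm_nonneg _).trans (hD 0 ⟨by linarith, ht.1.trans ht.2⟩)
  exact norm_integral_sub_integral_le hM ht hy hω (mul_nonneg hl hD0) fun s hs =>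
    (hF s _ _).trans (mul_le_mul_of_nonneg_left
      (iSup_norm_history_sub_le hr ⟨hs.1, hs.2.trans ht.2⟩ hD) hl)

lemma norm_sum_sub_sum_le (hM : ∀ u ∈ Icc 0 T, ‖S u‖ ≤ M) {ι : Type*} [Fintype ι]
    {tk : ι → ℝ} (htk : ∀ k, 0 ≤ tk k) {t : ℝ} (ht : t ∈ Icc 0 T)
    (s : Finset ι) (hs : ∀ k ∈ s, tk k ≤ t) {a b : ι → E} {c : ι → ℝ} (hc : ∀ k, 0 ≤ c k)
    (hab : ∀ k, ‖a k - b k‖ ≤ c k) :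
    ‖∑ k ∈ s, S (t - tk k) (a k) - ∑ k ∈ s, S (t - tk k) (b k)‖ ≤ M * ∑ k, c k := by
  have hM0 : 0 ≤ M := (norm_nonneg _).trans (hM t ht)
  rw [← Finset.sum_sub_distrib, Finset.mul_sum]
  calc _ ≤ ∑ k ∈ s, ‖S (t - tk k) (a k) - S (t - tk k) (b k)‖ := norm_sum_le _ _
    _ ≤ ∑ k ∈ s, M * c k := by
        refine Finset.sum_le_sum fun k hk => ?_
        refine (norm_apply_sub_apply_le hM ⟨?_, ?_⟩ _ _).trans
          (mul_le_mul_of_nonneg_left (hab k) hM0)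
        · linarith [hs k hk]
        · linarith [htk k, ht.2]
    _ ≤ ∑ k, M * c k := Finset.sum_le_sum_of_subset_of_nonneg (Finset.subset_univ s)
        fun k _ _ => mul_nonneg hM0 (hc k)

lemma norm_jump_sum_sub_le (hM : ∀ u ∈ Icc 0 T, ‖S u‖ ≤ M) {ι : Type*} [Fintype ι]
    {J : ι → ℝ → E → E} {d : ι → ℝ} (hd : ∀ k, 0 ≤ d k)
    (hJ : ∀ (k : ι) (t : ℝ) (y z : E), ‖J k t y - J k t z‖ ≤ d k * ‖y - z‖)
    {tk : ι → ℝ} (htk : ∀ k, 0 ≤ tk k) {y ω : ℝ → E} {D : ℝ}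
    (hD : ∀ k, ‖y (tk k) - ω (tk k)‖ ≤ D) {t : ℝ} (ht : t ∈ Icc 0 T)
    (s : Finset ι) (hs : ∀ k ∈ s, tk k ≤ t) :
    ‖∑ k ∈ s, S (t - tk k) (J k (tk k) (y (tk k)))
      - ∑ k ∈ s, S (t - tk k) (J k (tk k) (ω (tk k)))‖ ≤ M * ((∑ k, d k) * D) := by
  rw [Finset.sum_mul]
  exact norm_sum_sub_sum_le hM htk ht s hs
    (fun k => mul_nonneg (hd k) ((norm_nonneg _).trans (hD k)))
    fun k => (hJ k _ _ _).trans (mul_le_mul_of_nonneg_left (hD k) (hd k))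

end BoundedFamily

theorem fixed_point_kappa_contraction_general {Z U : Type*}
    [NormedAddCommGroup Z] [NormedSpace ℝ Z]
    [NormedAddCommGroup U] [NormedSpace ℝ U]
    (T r : ℝ) (hr : 0 < r) (hrT : r < T)
    {q m : ℕ} (τ : Fin q → ℝ)
    (hτ0 : ∀ i, 0 < τ i) (hτr : ∀ i, τ i < r)
    (tk : Fin m → ℝ)
    (htk0 : ∀ k, 0 < tk k) (htkT : ∀ k, tk k < T)
    (S : ℝ → Z →L[ℝ] Z) (M : ℝ) (hM : ∀ t ∈ Icc (0 : ℝ) T, ‖S t‖ ≤ M)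
    (F : ℝ → (ℝ → Z) → Z) (l : ℝ) (hl : 0 ≤ l)
    (hF : ∀ (t : ℝ) (ψ₁ ψ₂ : ℝ → Z),
      ‖F t ψ₁ - F t ψ₂‖ ≤ l * ⨆ θ : Icc (-r) (0 : ℝ), ‖ψ₁ θ - ψ₂ θ‖)
    (G : (Fin q → ℝ → Z) → ℝ → Z) (L : ℝ) (hL : 0 ≤ L)
    (hG : ∀ (φ ψ : Fin q → ℝ → Z) (s : ℝ), s ∈ Icc (-r) (0 : ℝ) →
      ‖G φ s - G ψ s‖ ≤ L * ∑ i, ‖φ i s - ψ i s‖)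
    (J : Fin m → ℝ → Z → Z) (d : Fin m → ℝ) (hd : ∀ k, 0 ≤ d k)
    (hJ : ∀ (k : Fin m) (t : ℝ) (y z : Z), ‖J k t y - J k t z‖ ≤ d k * ‖y - z‖)
    (ρ : ℝ → Z) (zs : Z)
    (𝓛 : (ℝ → Z) → Z)
    (h𝓛 : ∀ y : ℝ → Z, 𝓛 y =
      zs - S T (ρ 0 - G (fun i θ => y (τ i + θ)) 0)
        - (∫ s in (0 : ℝ)..T, S (T - s) (F s (fun θ => y (s + θ))))
        - ∑ k, S (T - tk k) (J k (tk k) (y (tk k))))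
    (B : U →L[ℝ] Z) (Γ : Z →ₗ[ℝ] ℝ → U) (K : ℝ) (hK : 0 ≤ K)
    (hΓ : ∀ (ξ : Z), ∀ s ∈ Icc (0 : ℝ) T, ‖Γ ξ s‖ ≤ K * ‖ξ‖)
    (κ : (ℝ → Z) → ℝ → Z)
    (hκ : ∀ (v : ℝ → Z) (t : ℝ), κ v t =
      S t (ρ 0 - G (fun i θ => v (τ i + θ)) 0)
        + (∫ s in (0 : ℝ)..t, S (t - s) (B (Γ (𝓛 v) s)))
        + (∫ s in (0 : ℝ)..t, S (t - s) (F s (fun θ => v (s + θ))))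
        + ∑ k ∈ Finset.univ.filter (fun k => tk k < t),
            S (t - tk k) (J k (tk k) (v (tk k))))
    (y ω : ℝ → Z)
    (hybdd : ∃ C, ∀ t ∈ Icc (-r) T, ‖y t‖ ≤ C)
    (hωbdd : ∃ C, ∀ t ∈ Icc (-r) T, ‖ω t‖ ≤ C)
    (hFy : ∀ t ∈ Icc (0 : ℝ) T, IntervalIntegrable
      (fun s => S (t - s) (F s (fun θ => y (s + θ)))) volume 0 t)
    (hFω : ∀ t ∈ Icc (0 : ℝ) T, IntervalIntegrable
      (fun s => S (t - s) (F s (fun θ => ω (s + θ)))) volume 0 t)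
    (hBy : ∀ t ∈ Icc (0 : ℝ) T, IntervalIntegrable
      (fun s => S (t - s) (B (Γ (𝓛 y) s))) volume 0 t)
    (hBω : ∀ t ∈ Icc (0 : ℝ) T, IntervalIntegrable
      (fun s => S (t - s) (B (Γ (𝓛 ω) s))) volume 0 t) :
    ∀ t ∈ Icc (0 : ℝ) T,
      ‖κ y t - κ ω t‖ ≤
        (M * L * q
            + M * T * ‖B‖ * K * (M * L * q + M * T * l + M * ∑ k, d k)
            + M * T * l + M * ∑ k, d k) *
          ⨆ σ : Icc (-r) T, ‖y σ - ω σ‖ := by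
  intro t ht
  have hT : T ∈ Icc 0 T := ⟨ht.1.trans ht.2, le_rfl⟩
  set D := ⨆ σ : Icc (-r) T, ‖y σ - ω σ‖
  have hD : ∀ σ ∈ Icc (-r) T, ‖y σ - ω σ‖ ≤ D := fun σ hσ =>
    le_ciSup (bddAbove_range_norm_sub hybdd hωbdd) ⟨σ, hσ⟩
  have hDτ : ∀ i, ‖y (τ i) - ω (τ i)‖ ≤ D := fun i =>
    hD _ ⟨by linarith [hτ0 i], by linarith [hτr i]⟩
  have hDtk : ∀ k, ‖y (tk k) - ω (tk k)‖ ≤ D := fun k =>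
    hD _ ⟨by linarith [htk0 k], (htkT k).le⟩
  have hNL := fun u (hu : u ∈ Icc 0 T) => norm_nonlocal_sub_le hM hr.le hL hG hDτ hu (ρ 0)
  have hFd := fun u (hu : u ∈ Icc 0 T) =>
    norm_integral_history_sub_le hM hr.le hl hF hD hu (hFy u hu) (hFω u hu)
  have hJd := fun u (hu : u ∈ Icc 0 T) =>
    norm_jump_sum_sub_le hM hd hJ (fun k => (htk0 k).le) hDtk hu
  simp only [Fintype.card_fin] at hNL
  have h𝓛d : ‖𝓛 y - 𝓛 ω‖ ≤ (M * L * q + M * T * l + M * ∑ k, d k) * D := by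
    rw [h𝓛, h𝓛]
    refine (norm_sub₃_sub_sub₃_le _ _ _ _ _ _ _).trans ?_
    linarith [hNL T hT, hFd T hT, hJd T hT Finset.univ fun k _ => (htkT k).le]
  have hBK : 0 ≤ ‖B‖ * K := mul_nonneg (norm_nonneg B) hK
  have hBd := norm_integral_sub_integral_le hM ht (hBy t ht) (hBω t ht)
    (mul_nonneg hBK ((norm_nonneg _).trans h𝓛d)) fun s hs =>
      (norm_control_sub_le B hΓ ⟨hs.1, hs.2.trans ht.2⟩ _ _).trans
        (mul_le_mul_of_nonneg_left h𝓛d hBK)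
  have hJt := hJd t ht {k | tk k < t} fun k hk => (Finset.mem_filter.mp hk).2.le
  rw [hκ, hκ]
  calc _ ≤ _ := norm_add₄_sub_add₄_le _ _ _ _ _ _ _ _
    _ ≤ _ := add_le_add (add_le_add (add_le_add (hNL t ht) hBd) (hFd t ht)) hJt
    _ = _ := by ring

/-- Contraction estimate for the solution-plus-control operator `κ` in the fixed-point
proof of exact controllability of the impulsive semilinear system with delays and
nonlocal conditions: with `𝒞 = MLq + MTl + MN`, the operator
`(κ y)(t) = S(t)(ρ(0) - G(y_{τ₁},…,y_{τ_q})(0)) + ∫₀ᵗ S(t-s) B (Γ(L(y)))(s) ds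
           + ∫₀ᵗ S(t-s) F(s, y_s) ds + Σ_{t_k < t} S(t-t_k) J_k(t_k, y(t_k))`
satisfies, for all `t ∈ [0,T]`,
`‖(κ y)(t) - (κ ω)(t)‖ ≤ (MLq + MT‖B‖K𝒞 + MTl + MN) · sup_{σ ∈ [-r,T]} ‖y(σ) - ω(σ)‖`;
in particular, if this constant is `< 1`, `κ` is a contraction in the sup norm. -/
theorem fixed_point_kappa_contraction {Z U : Type*}
    [NormedAddCommGroup Z] [NormedSpace ℝ Z] [CompleteSpace Z]
    [NormedAddCommGroup U] [NormedSpace ℝ U]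
    (T r : ℝ) (hT : 0 < T) (hr : 0 < r) (hrT : r < T)
    {q m : ℕ} (τ : Fin q → ℝ) (hτ : StrictMono τ)
    (hτ0 : ∀ i, 0 < τ i) (hτr : ∀ i, τ i < r)
    (tk : Fin m → ℝ) (htk : StrictMono tk)
    (htk0 : ∀ k, 0 < tk k) (htkT : ∀ k, tk k < T)
    (S : ℝ → Z →L[ℝ] Z) (M : ℝ) (hM : ∀ t ∈ Icc (0 : ℝ) T, ‖S t‖ ≤ M)
    (F : ℝ → (ℝ → Z) → Z) (l : ℝ) (hl : 0 ≤ l)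
    (hF : ∀ (t : ℝ) (ψ₁ ψ₂ : ℝ → Z),
      ‖F t ψ₁ - F t ψ₂‖ ≤ l * ⨆ θ : Icc (-r) (0 : ℝ), ‖ψ₁ θ - ψ₂ θ‖)
    (G : (Fin q → ℝ → Z) → ℝ → Z) (L : ℝ) (hL : 0 ≤ L)
    (hG : ∀ (φ ψ : Fin q → ℝ → Z) (s : ℝ), s ∈ Icc (-r) (0 : ℝ) →
      ‖G φ s - G ψ s‖ ≤ L * ∑ i, ‖φ i s - ψ i s‖)
    (J : Fin m → ℝ → Z → Z) (d : Fin m → ℝ) (hd : ∀ k, 0 ≤ d k)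
    (hJ : ∀ (k : Fin m) (t : ℝ) (y z : Z), ‖J k t y - J k t z‖ ≤ d k * ‖y - z‖)
    (ρ : ℝ → Z) (zs : Z)
    (𝓛 : (ℝ → Z) → Z)
    (h𝓛 : ∀ y : ℝ → Z, 𝓛 y =
      zs - S T (ρ 0 - G (fun i θ => y (τ i + θ)) 0)
        - (∫ s in (0 : ℝ)..T, S (T - s) (F s (fun θ => y (s + θ))))
        - ∑ k, S (T - tk k) (J k (tk k) (y (tk k))))
    (B : U →L[ℝ] Z) (Γ : Z →ₗ[ℝ] ℝ → U) (K : ℝ) (hK : 0 ≤ K)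
    (hΓ : ∀ (ξ : Z), ∀ s ∈ Icc (0 : ℝ) T, ‖Γ ξ s‖ ≤ K * ‖ξ‖)
    (κ : (ℝ → Z) → ℝ → Z)
    (hκ : ∀ (v : ℝ → Z) (t : ℝ), κ v t =
      S t (ρ 0 - G (fun i θ => v (τ i + θ)) 0)
        + (∫ s in (0 : ℝ)..t, S (t - s) (B (Γ (𝓛 v) s)))
        + (∫ s in (0 : ℝ)..t, S (t - s) (F s (fun θ => v (s + θ))))
        + ∑ k ∈ Finset.univ.filter (fun k => tk k < t),
            S (t - tk k) (J k (tk k) (v (tk k))))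
    (y ω : ℝ → Z)
    (hybdd : ∃ C, ∀ t ∈ Icc (-r) T, ‖y t‖ ≤ C)
    (hωbdd : ∃ C, ∀ t ∈ Icc (-r) T, ‖ω t‖ ≤ C)
    (hFy : ∀ t ∈ Icc (0 : ℝ) T, IntervalIntegrable
      (fun s => S (t - s) (F s (fun θ => y (s + θ)))) volume 0 t)
    (hFω : ∀ t ∈ Icc (0 : ℝ) T, IntervalIntegrable
      (fun s => S (t - s) (F s (fun θ => ω (s + θ)))) volume 0 t)
    (hBy : ∀ t ∈ Icc (0 : ℝ) T, IntervalIntegrable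
      (fun s => S (t - s) (B (Γ (𝓛 y) s))) volume 0 t)
    (hBω : ∀ t ∈ Icc (0 : ℝ) T, IntervalIntegrable
      (fun s => S (t - s) (B (Γ (𝓛 ω) s))) volume 0 t) :
    ∀ t ∈ Icc (0 : ℝ) T,
      ‖κ y t - κ ω t‖ ≤
        (M * L * q
            + M * T * ‖B‖ * K * (M * L * q + M * T * l + M * ∑ k, d k)
            + M * T * l + M * ∑ k, d k) *
          ⨆ σ : Icc (-r) T, ‖y σ - ω σ‖ :=
  fixed_point_kappa_contraction_general T r hr hrT τ hτ0 hτr tk htk0 htkT S M hM F l hl hF G L hL hG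
    J d hd hJ ρ zs 𝓛 h𝓛 B Γ K hK hΓ κ hκ y ω hybdd hωbdd hFy hFω hBy hBω
end

section
/- In the setting of the operator κ above (Banach space Z, normed space U, S : [0,T] → (Z →L Z), B : U →L Z, nonlinearities F, G, J_k, initial history ρ, target z*, steering operator Γ, and L(y) = z* − S(T)(ρ(0) − G(y_{τ₁},…,y_{τ_q})(0)) − ∫₀ᵀ S(T−s) F(s, y_s) ds − Σ_{k=1}^{m} S(T−t_k) J_k(t_k, y(t_k))), suppose additionally that Γ is a right inverse of the controllability map, i.e., for every ξ ∈ Z, ∫₀ᵀ S(T−s) B (Γξ)(s) ds = ξ. Then every fixed point y of κ (i.e., every y with (κ y)(t) = y(t) for all t ∈ [0,T]) satisfies y(T) = z*. -/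
open MeasureTheory Set

theorem fixed_point_reaches_target_general {Z U : Type*}
    [NormedAddCommGroup Z] [NormedSpace ℝ Z] [CompleteSpace Z]
    [NormedAddCommGroup U] [NormedSpace ℝ U]
    (T : ℝ) (hT : 0 < T)
    {q m : ℕ} (τ : Fin q → ℝ)
    (tk : Fin m → ℝ) (htkT : ∀ k, tk k < T)
    (S : ℝ → Z →L[ℝ] Z)
    (F : ℝ → (ℝ → Z) → Z)
    (G : (Fin q → ℝ → Z) → ℝ → Z)
    (J : Fin m → ℝ → Z → Z)
    (ρ : ℝ → Z) (zs : Z)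
    (B : U →L[ℝ] Z) (Γ : Z →ₗ[ℝ] ℝ → U)
    (𝓛 : (ℝ → Z) → Z)
    (h𝓛 : ∀ y : ℝ → Z, 𝓛 y =
      zs - S T (ρ 0 - G (fun i θ => y (τ i + θ)) 0)
        - (∫ s in (0 : ℝ)..T, S (T - s) (F s (fun θ => y (s + θ))))
        - ∑ k, S (T - tk k) (J k (tk k) (y (tk k))))
    (κ : (ℝ → Z) → ℝ → Z)
    (hκ : ∀ (v : ℝ → Z) (t : ℝ), κ v t =
      S t (ρ 0 - G (fun i θ => v (τ i + θ)) 0)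
        + (∫ s in (0 : ℝ)..t, S (t - s) (B (Γ (𝓛 v) s)))
        + (∫ s in (0 : ℝ)..t, S (t - s) (F s (fun θ => v (s + θ))))
        + ∑ k ∈ Finset.univ.filter (fun k => tk k < t),
            S (t - tk k) (J k (tk k) (v (tk k))))
    (hright : ∀ ξ : Z, (∫ s in (0 : ℝ)..T, S (T - s) (B (Γ ξ s))) = ξ)
    (y : ℝ → Z)
    (hfix : ∀ t ∈ Icc (0 : ℝ) T, κ y t = y t) :
    y T = zs := by
  have all_impulses_before_T : Finset.univ.filter (fun k => tk k < T) = Finset.univ :=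
    Finset.filter_true_of_mem fun k _ => htkT k
  rw [← hfix T ⟨hT.le, le_rfl⟩, hκ, hright, h𝓛, all_impulses_before_T]
  abel

/-- If the steering operator `Γ` is a right inverse of the controllability map, i.e.
`∫₀ᵀ S(T-s) B (Γξ)(s) ds = ξ` for every `ξ`, then every fixed point `y` of the
solution-plus-control operator
`(κ y)(t) = S(t)(ρ(0) - G(y_{τ₁},…,y_{τ_q})(0)) + ∫₀ᵗ S(t-s) B (Γ(L(y)))(s) ds
           + ∫₀ᵗ S(t-s) F(s, y_s) ds + Σ_{t_k < t} S(t-t_k) J_k(t_k, y(t_k))`,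
where `L(y) = z* - S(T)(ρ(0) - G(y_{τ₁},…,y_{τ_q})(0)) - ∫₀ᵀ S(T-s) F(s, y_s) ds
             - Σ_{k=1}^m S(T-t_k) J_k(t_k, y(t_k))`,
satisfies `y(T) = z*`. -/
theorem fixed_point_reaches_target {Z U : Type*}
    [NormedAddCommGroup Z] [NormedSpace ℝ Z] [CompleteSpace Z]
    [NormedAddCommGroup U] [NormedSpace ℝ U]
    (T r : ℝ) (hT : 0 < T) (hr : 0 < r) (hrT : r < T)
    {q m : ℕ} (τ : Fin q → ℝ) (hτ : StrictMono τ)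
    (hτ0 : ∀ i, 0 < τ i) (hτr : ∀ i, τ i < r)
    (tk : Fin m → ℝ) (htk : StrictMono tk)
    (htk0 : ∀ k, 0 < tk k) (htkT : ∀ k, tk k < T)
    (S : ℝ → Z →L[ℝ] Z)
    (F : ℝ → (ℝ → Z) → Z)
    (G : (Fin q → ℝ → Z) → ℝ → Z)
    (J : Fin m → ℝ → Z → Z)
    (ρ : ℝ → Z) (zs : Z)
    (B : U →L[ℝ] Z) (Γ : Z →ₗ[ℝ] ℝ → U)
    (𝓛 : (ℝ → Z) → Z)
    (h𝓛 : ∀ y : ℝ → Z, 𝓛 y =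
      zs - S T (ρ 0 - G (fun i θ => y (τ i + θ)) 0)
        - (∫ s in (0 : ℝ)..T, S (T - s) (F s (fun θ => y (s + θ))))
        - ∑ k, S (T - tk k) (J k (tk k) (y (tk k))))
    (κ : (ℝ → Z) → ℝ → Z)
    (hκ : ∀ (v : ℝ → Z) (t : ℝ), κ v t =
      S t (ρ 0 - G (fun i θ => v (τ i + θ)) 0)
        + (∫ s in (0 : ℝ)..t, S (t - s) (B (Γ (𝓛 v) s)))
        + (∫ s in (0 : ℝ)..t, S (t - s) (F s (fun θ => v (s + θ))))
        + ∑ k ∈ Finset.univ.filter (fun k => tk k < t),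
            S (t - tk k) (J k (tk k) (v (tk k))))
    (hright : ∀ ξ : Z, (∫ s in (0 : ℝ)..T, S (T - s) (B (Γ ξ s))) = ξ)
    (y : ℝ → Z)
    (hfix : ∀ t ∈ Icc (0 : ℝ) T, κ y t = y t) :
    y T = zs :=
  fixed_point_reaches_target_general T hT τ tk htkT S F G J ρ zs B Γ 𝓛 h𝓛 κ hκ hright y hfix
end
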